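/- For a fixed k, the temporal (n,k)-pseudocores are nested in n: G_{(0,k)} ⊇ G_{(1,k)} ⊇ … ⊇ G_{(η_k,k)}. Equivalently, the n-th order temporal H-index of any node is nonincreasing in n: h^{(n+1)}_v ≤ h^{(n)}_v for all nodes v and all n ≥ 0. -/
import Mathlib


def Hop (S : Multiset ℕ) : ℕ :=
  Nat.findGreatest (fun i => i ≤ (S.filter (fun s => i ≤ s)).card) S.card

/-- A temporal edge `(u, v, t, λ)`: from `u` to `v`, availability time `t`, transition time `λ`. -/
abbrev TEdge (V : Type) := V × V × ℕ × ℕ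

/-- The temporal edges leaving `v` with availability time at least `t`. -/
def outEdges {V : Type} [DecidableEq V] (E : Multiset (TEdge V)) (v : V) (t : ℕ) :
    Multiset (TEdge V) :=
  E.filter (fun e => e.1 = v ∧ t ≤ e.2.2.1)

/-- Time-dependent out-degree `δ⁺(v, t)`. -/
def tdOutDeg {V : Type} [DecidableEq V] (E : Multiset (TEdge V)) (v : V) (t : ℕ) : ℕ :=
  (outEdges E v t).card

/-- The time-dependent outward `n`-th order temporal H-index `h^{(n)}(v, t)`. -/
def thIndex {V : Type} [DecidableEq V] (E : Multiset (TEdge V)) : ℕ → V → ℕ → ℕ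
  | 0, v, t => tdOutDeg E v t
  | n + 1, v, t => Hop ((outEdges E v t).map (fun e => thIndex E n e.2.1 (e.2.2.1 + e.2.2.2)))

/-- The node set of the temporal `(n,k)`-pseudocore: nodes whose `n`-th order temporal
H-index (with respect to the whole network `G`) is at least `k`. -/
def pseudocore {V : Type} [DecidableEq V] (E : Multiset (TEdge V)) (n k : ℕ) : Set V :=
  {v | k ≤ thIndex E n v 0}

lemma filter_card_le_of_rel {S T : Multiset ℕ} (h : Multiset.Rel (· ≤ ·) S T) (i : ℕ) :
    (S.filter (fun s => i ≤ s)).card ≤ (T.filter (fun s => i ≤ s)).card := by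
  induction h with
  | zero => simp
  | @cons a b s t hab _ ih =>
    simp only [Multiset.filter_cons]
    rcases le_or_gt i a with h1 | h1
    · rw [if_pos h1, if_pos (h1.trans hab)]
      simpa using Nat.add_le_add ih (le_refl 1)
    · rw [if_neg (not_le.mpr h1)]
      split_ifs <;> simp <;> omega

lemma Hop_le_card (S : Multiset ℕ) : Hop S ≤ S.card := Nat.findGreatest_le _

lemma Hop_mono {S T : Multiset ℕ} (h : Multiset.Rel (· ≤ ·) S T) : Hop S ≤ Hop T := by
  have hcard : S.card = T.card := Multiset.card_eq_card_of_rel h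
  rcases Nat.eq_zero_or_pos (Hop S) with h0 | h0
  · omega
  · apply Nat.le_findGreatest
    · exact hcard ▸ Hop_le_card S
    · have hspec : Hop S ≤ ((S.filter (fun s => Hop S ≤ s)).card) :=
        Nat.findGreatest_spec (P := fun i => i ≤ (S.filter (fun s => i ≤ s)).card)
          (m := 0) (Nat.zero_le _) (Nat.zero_le _)
      exact hspec.trans (filter_card_le_of_rel h _)

lemma thIndex_succ_le {V : Type} [DecidableEq V] (E : Multiset (TEdge V)) :
    ∀ (n : ℕ) (v : V) (t : ℕ), thIndex E (n + 1) v t ≤ thIndex E n v t := by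
  intro n
  induction n with
  | zero =>
    intro v t
    calc thIndex E 1 v t ≤ ((outEdges E v t).map
          (fun e => thIndex E 0 e.2.1 (e.2.2.1 + e.2.2.2))).card := Hop_le_card _
      _ = tdOutDeg E v t := by simp [tdOutDeg]
  | succ n ih =>
    intro v t
    show Hop _ ≤ Hop _
    apply Hop_mono
    rw [Multiset.rel_map]
    exact Multiset.rel_refl_of_refl_on (fun e _ => ih e.2.1 (e.2.2.1 + e.2.2.2))

/-- The `n`-th order temporal H-index of any node is nonincreasing in `n`, and hence
for fixed `k` the pseudocores are nested in `n`: `G_{(0,k)} ⊇ G_{(1,k)} ⊇ …`. -/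
theorem pseudocore_nested_in_n {V : Type} [DecidableEq V] (E : Multiset (TEdge V)) :
    (∀ (v : V) (n : ℕ), thIndex E (n + 1) v 0 ≤ thIndex E n v 0) ∧
    (∀ (n k : ℕ), pseudocore E (n + 1) k ⊆ pseudocore E n k) := by
  refine ⟨fun v n => thIndex_succ_le E n v 0, fun n k v hv => ?_⟩
  exact le_trans hv (thIndex_succ_le E n v 0)
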